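/- Let V : [0,T) → ℝ be continuously differentiable with V(0) > 0 and V'(t) ≥ (c/2)(t+s)⁻¹ V(t)² for all t ∈ [0,T), where c > 0 and s > 0. Then V(t) > 0 and V(t) ≥ 2V(0)/(2 - cV(0)·log((t+s)/s)) for all t ∈ [0,T) with 2 - cV(0)·log((t+s)/s) > 0; moreover T ≤ s·exp(2/(cV(0))) - s. -/

import Mathlib

/-
If `V' ≥ a V²` with `a ≥ 0`, then `V` increases and stays positive, and `1/V + A` decreases
for any primitive `A` of `a`. With `a t = (c/2)(t+s)⁻¹` and `A t = (c/2) log (t+s)` this gives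
`1/V(t) ≤ 1/V(0) - (c/2) log((t+s)/s)`, which is the lower bound; since the left side is
positive, `log((t+s)/s) < 2/(c V(0))` on `[0,T)`, which bounds `T`.
-/

open Set Real

lemma monotoneOn_of_hasDerivAt_nonneg {D : Set ℝ} (hD : Convex ℝ D) {f f' : ℝ → ℝ}
    (hf : ∀ x ∈ D, HasDerivAt f (f' x) x) (hf' : ∀ x ∈ D, 0 ≤ f' x) : MonotoneOn f D :=
  monotoneOn_of_hasDerivWithinAt_nonneg hD (fun x hx => (hf x hx).continuousAt.continuousWithinAt)
    (fun x hx => (hf x (interior_subset hx)).hasDerivWithinAt)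
    (fun x hx => hf' x (interior_subset hx))

lemma antitoneOn_of_hasDerivAt_nonpos {D : Set ℝ} (hD : Convex ℝ D) {f f' : ℝ → ℝ}
    (hf : ∀ x ∈ D, HasDerivAt f (f' x) x) (hf' : ∀ x ∈ D, f' x ≤ 0) : AntitoneOn f D :=
  antitoneOn_of_hasDerivWithinAt_nonpos hD (fun x hx => (hf x hx).continuousAt.continuousWithinAt)
    (fun x hx => (hf x (interior_subset hx)).hasDerivWithinAt)
    (fun x hx => hf' x (interior_subset hx))

section Riccati

variable {D : Set ℝ} {V V' a : ℝ → ℝ}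

lemma pos_of_riccati (hD : Convex ℝ D) (hderiv : ∀ t ∈ D, HasDerivAt V (V' t) t)
    (ha : ∀ t ∈ D, 0 ≤ a t) (hineq : ∀ t ∈ D, a t * V t ^ 2 ≤ V' t)
    {t₀ t : ℝ} (ht₀ : t₀ ∈ D) (ht : t ∈ D) (hle : t₀ ≤ t) (hV₀ : 0 < V t₀) :
    0 < V t :=
  have hmono : MonotoneOn V D := monotoneOn_of_hasDerivAt_nonneg hD hderiv
    fun x hx => (mul_nonneg (ha x hx) (sq_nonneg _)).trans (hineq x hx)
  hV₀.trans_le (hmono ht₀ ht hle)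

lemma antitoneOn_inv_add_of_riccati {A : ℝ → ℝ} (hD : Convex ℝ D)
    (hderiv : ∀ t ∈ D, HasDerivAt V (V' t) t) (hA : ∀ t ∈ D, HasDerivAt A (a t) t)
    (hpos : ∀ t ∈ D, 0 < V t) (hineq : ∀ t ∈ D, a t * V t ^ 2 ≤ V' t) :
    AntitoneOn (fun t => (V t)⁻¹ + A t) D := by
  refine antitoneOn_of_hasDerivAt_nonpos hD
    (fun t ht => ((hderiv t ht).inv (hpos t ht).ne').add (hA t ht)) fun t ht => ?_
  have hV2 : 0 < V t ^ 2 := pow_pos (hpos t ht) 2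
  have : a t ≤ V' t / V t ^ 2 := (le_div_iff₀ hV2).2 (hineq t ht)
  rw [neg_div]
  linarith

end Riccati

lemma hasDerivAt_half_mul_log_add {c s t : ℝ} (hts : 0 < t + s) :
    HasDerivAt (fun t => c / 2 * log (t + s)) (c / 2 * (t + s)⁻¹) t := by
  simpa using (((hasDerivAt_id t).add_const s).log hts.ne').const_mul (c / 2)

lemma le_div_of_inv_le_inv_sub {v v₀ c L : ℝ} (hv : 0 < v) (hv₀ : 0 < v₀)
    (hinv : v⁻¹ ≤ v₀⁻¹ - c / 2 * L) (hD : 0 < 2 - c * v₀ * L) :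
    2 * v₀ / (2 - c * v₀ * L) ≤ v := by
  rw [div_le_iff₀ hD]
  have := mul_le_mul_of_nonneg_left hinv (by positivity : 0 ≤ 2 * v₀ * v)
  have e1 : 2 * v₀ * v * v⁻¹ = 2 * v₀ := by field_simp
  have e2 : 2 * v₀ * v * (v₀⁻¹ - c / 2 * L) = v * (2 - c * v₀ * L) := by field_simp
  linarith

theorem stmt_6_general (V V' : ℝ → ℝ) (T c s : ℝ) (hc : 0 < c) (hs : 0 < s)
    (hderiv : ∀ t ∈ Set.Ico (0 : ℝ) T, HasDerivAt V (V' t) t)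
    (hV0 : 0 < V 0)
    (hineq : ∀ t ∈ Set.Ico (0 : ℝ) T, V' t ≥ (c / 2) * (t + s)⁻¹ * (V t) ^ 2) :
    (∀ t ∈ Set.Ico (0 : ℝ) T,
      0 < V t ∧
      (0 < 2 - c * V 0 * Real.log ((t + s) / s) →
        V t ≥ 2 * V 0 / (2 - c * V 0 * Real.log ((t + s) / s)))) ∧
    T ≤ s * Real.exp (2 / (c * V 0)) - s := by
  have hts : ∀ t ∈ Ico (0 : ℝ) T, 0 < t + s := fun t ht => by linarith [ht.1]
  have hzero : ∀ t ∈ Ico (0 : ℝ) T, (0 : ℝ) ∈ Ico 0 T := fun t ht =>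
    ⟨le_rfl, ht.1.trans_lt ht.2⟩
  have hpos : ∀ t ∈ Ico (0 : ℝ) T, 0 < V t := fun t ht =>
    pos_of_riccati (convex_Ico 0 T) hderiv (fun x hx => by have := hts x hx; positivity)
      hineq (hzero t ht) ht ht.1 hV0
  have hinv : ∀ t ∈ Ico (0 : ℝ) T, (V t)⁻¹ ≤ (V 0)⁻¹ - c / 2 * log ((t + s) / s) := by
    intro t ht
    have h := antitoneOn_inv_add_of_riccati (convex_Ico 0 T) hderiv
      (fun x hx => hasDerivAt_half_mul_log_add (hts x hx)) hpos hineq (hzero t ht) ht ht.1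
    rw [log_div (hts t ht).ne' hs.ne']
    simp only [zero_add] at h
    linarith
  refine ⟨fun t ht => ⟨hpos t ht, le_div_of_inv_le_inv_sub (hpos t ht) hV0 (hinv t ht)⟩, ?_⟩
  by_contra! hT
  set t₀ := s * exp (2 / (c * V 0)) - s
  have ht₀ : t₀ ∈ Ico 0 T :=
    ⟨by nlinarith [one_le_exp (by positivity : 0 ≤ 2 / (c * V 0))], hT⟩
  have hlog : c / 2 * log ((t₀ + s) / s) = (V 0)⁻¹ := by
    rw [show (t₀ + s) / s = exp (2 / (c * V 0)) by field_simp; ring, log_exp]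
    field_simp
  linarith [hinv t₀ ht₀, inv_pos.2 (hpos t₀ ht₀)]

/-- Riccati differential inequality `V' ≥ (c/2)(t+s)⁻¹ V²`: lower bound and
bound on the existence time. -/
theorem stmt_6 (V V' : ℝ → ℝ) (T c s : ℝ) (hc : 0 < c) (hs : 0 < s) (hT : 0 < T)
    (hderiv : ∀ t ∈ Set.Ico (0 : ℝ) T, HasDerivAt V (V' t) t)
    (hcont : ContinuousOn V' (Set.Ico 0 T))
    (hV0 : 0 < V 0)
    (hineq : ∀ t ∈ Set.Ico (0 : ℝ) T, V' t ≥ (c / 2) * (t + s)⁻¹ * (V t) ^ 2) :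
    (∀ t ∈ Set.Ico (0 : ℝ) T,
      0 < V t ∧
      (0 < 2 - c * V 0 * Real.log ((t + s) / s) →
        V t ≥ 2 * V 0 / (2 - c * V 0 * Real.log ((t + s) / s)))) ∧
    T ≤ s * Real.exp (2 / (c * V 0)) - s :=
  stmt_6_general V V' T c s hc hs hderiv hV0 hineq
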